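/- Suppose the noise values {L_h}_{h∈H} are independent real-valued random variables with E[L_h] = 0 and Var(L_h) = 8 d² / ε² for every h (the equal-split allocation ε_ℓ = ε/d at every level ℓ, with ε > 0). Then for every district D ⊆ H_d with associated weights {w_h}, the district error satisfies Var(E_D) = (8 d² / ε²) · (w_root² + Frag(D)). -/

import Mathlib

open Finset MeasureTheory ProbabilityTheory

structure Hierarchy where
  Node : Type
  fintypeNode : Fintype Node
  decEqNode : DecidableEq Node
  d : ℕ
  d_pos : 1 ≤ d
  root : Node
  level : Node → ℕ
  parent : Node → Node
  level_pos : ∀ h, 1 ≤ level h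
  level_le : ∀ h, level h ≤ d
  level_root : level root = 1
  root_unique : ∀ h, level h = 1 → h = root
  parent_level : ∀ h, h ≠ root → level (parent h) + 1 = level h
  child_exists : ∀ h, level h < d → ∃ c, c ≠ root ∧ parent c = h

attribute [instance] Hierarchy.fintypeNode Hierarchy.decEqNode

namespace Hierarchy

variable (H : Hierarchy)

def children (h : H.Node) : Finset H.Node :=
  Finset.univ.filter fun c => c ≠ H.root ∧ H.parent c = h

def levelSet (ℓ : ℕ) : Finset H.Node :=
  Finset.univ.filter fun h => H.level h = ℓ

def leaves : Finset H.Node := H.levelSet H.d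

def Consistent (a : H.Node → ℝ) : Prop :=
  ∀ h, H.level h < H.d → a h = ∑ c ∈ H.children h, a c

def IsToyDown (a L α : H.Node → ℝ) : Prop :=
  α H.root = a H.root + L H.root ∧
  ∀ h, H.level h < H.d →
    (∑ c ∈ H.children h, α c) = α h ∧
    ∀ x : H.Node → ℝ, (∑ c ∈ H.children h, x c) = α h →
      (∃ c ∈ H.children h, x c ≠ α c) →
      ∑ c ∈ H.children h, (α c - (a c + L c))^2 <
        ∑ c ∈ H.children h, (x c - (a c + L c))^2

def IsWeights (D : Finset H.Node) (w : H.Node → ℝ) : Prop :=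
  (∀ h, H.level h = H.d → w h = if h ∈ D then 1 else 0) ∧
  (∀ h, H.level h < H.d → w h = (∑ c ∈ H.children h, w c) / ((H.children h).card : ℝ))

def frag (w : H.Node → ℝ) : ℝ :=
  ∑ h ∈ Finset.univ.filter (fun h => h ≠ H.root), (w h - w (H.parent h))^2

end Hierarchy

/-!
ToyDown's constrained least squares step adds the same correction to every child, so a child's
error is its own noise plus an equal share of the parent's error minus its siblings' total noise.
Because a non-leaf weight is the average of its children's weights, summing the errors against the
weights level by level telescopes: the district error is `∑ₕ (w_h - w_ĥ) L_h`, with the root's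
parent weighted `0`. This is a linear combination of independent noises of equal variance, so its
variance is that variance times `∑ₕ (w_h - w_ĥ)² = w_root² + Frag(D)`.
-/

theorem eq_add_div_card_of_forall_sum_sq_lt {ι : Type*} {s : Finset ι} {y b : ι → ℝ}
    {t : ℝ} (hs : s.Nonempty) (hy : ∑ i ∈ s, y i = t)
    (hmin : ∀ x : ι → ℝ, ∑ i ∈ s, x i = t → (∃ i ∈ s, x i ≠ y i) →
      ∑ i ∈ s, (y i - b i) ^ 2 < ∑ i ∈ s, (x i - b i) ^ 2)
    {i : ι} (hi : i ∈ s) :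
    y i = b i + (t - ∑ j ∈ s, b j) / #s := by
  set δ := (t - ∑ j ∈ s, b j) / #s
  have hcard : (0 : ℝ) < #s := by exact_mod_cast hs.card_pos
  have hδ : #s * δ = t - ∑ j ∈ s, b j := mul_div_cancel₀ _ hcard.ne'
  have hshift : ∑ j ∈ s, (b j + δ) = t := by
    rw [sum_add_distrib, sum_const, nsmul_eq_mul]
    linarith
  by_contra hne
  have hlt := hmin (fun j => b j + δ) hshift ⟨i, hi, Ne.symm hne⟩
  simp only [add_sub_cancel_left, sum_const, nsmul_eq_mul] at hlt
  have hdev : ∑ j ∈ s, (y j - b j) = #s * δ := by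
    rw [sum_sub_distrib, hy, hδ]
  -- Cauchy–Schwarz: no point of the hyperplane is closer to `b` than the shift `b + δ`.
  have hcs := sq_sum_le_card_mul_sum_sq (s := s) (f := fun j => y j - b j)
  rw [hdev] at hcs
  nlinarith

theorem variance_sum_const_mul_of_iIndepFun {Ω ι : Type*} [MeasurableSpace Ω]
    {μ : Measure Ω} {X : ι → Ω → ℝ} (hX : ∀ i, MemLp (X i) 2 μ)
    (hindep : iIndepFun X μ) (c : ι → ℝ) (s : Finset ι) :
    variance (fun ω => ∑ i ∈ s, c i * X i ω) μ =
      ∑ i ∈ s, c i ^ 2 * variance (X i) μ := by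
  have hsum : (fun ω => ∑ i ∈ s, c i * X i ω) = ∑ i ∈ s, fun ω => c i * X i ω :=
    (Finset.sum_fn s _).symm
  rw [hsum, IndepFun.variance_sum (fun i _ => (hX i).const_mul (c i)) fun i _ j _ hij =>
    (hindep.indepFun hij).comp (measurable_const_mul _) (measurable_const_mul _)]
  simp_rw [variance_const_mul]

namespace Hierarchy

variable (H : Hierarchy)

theorem mem_children {c h : H.Node} : c ∈ H.children h ↔ c ≠ H.root ∧ H.parent c = h := by
  simp [children]

theorem children_nonempty {h : H.Node} (hh : H.level h < H.d) : (H.children h).Nonempty := by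
  obtain ⟨c, hc⟩ := H.child_exists h hh
  exact ⟨c, H.mem_children.2 hc⟩

theorem pairwiseDisjoint_children (s : Set H.Node) : s.PairwiseDisjoint H.children := by
  intro x _ y _ hxy
  refine Finset.disjoint_left.2 fun c hcx hcy => hxy ?_
  rw [← (H.mem_children.1 hcx).2, ← (H.mem_children.1 hcy).2]

theorem filter_level_le_one : ({h | H.level h ≤ 1} : Finset H.Node) = {H.root} := by
  ext h
  simp only [mem_filter, mem_univ, true_and, mem_singleton]
  refine ⟨fun hh => H.root_unique h (le_antisymm hh (H.level_pos h)), ?_⟩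
  rintro rfl
  exact H.level_root.le

theorem levelSet_one : H.levelSet 1 = {H.root} := by
  rw [← filter_level_le_one]
  ext h
  simp only [levelSet, mem_filter, mem_univ, true_and]
  have := H.level_pos h
  omega

theorem levelSet_succ {ℓ : ℕ} (hℓ : 1 ≤ ℓ) :
    H.levelSet (ℓ + 1) = (H.levelSet ℓ).biUnion H.children := by
  ext c
  simp only [levelSet, mem_biUnion, mem_filter, mem_univ, true_and, mem_children]
  constructor
  · intro hc
    have hcr : c ≠ H.root := by
      rintro rfl
      rw [H.level_root] at hc
      omega
    have := H.parent_level c hcr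
    exact ⟨H.parent c, by omega, hcr, rfl⟩
  · rintro ⟨h, hh, hcr, rfl⟩
    have := H.parent_level c hcr
    omega

theorem sum_filter_level_le_succ (f : H.Node → ℝ) (ℓ : ℕ) :
    ∑ h with H.level h ≤ ℓ + 1, f h =
      ∑ h with H.level h ≤ ℓ, f h + ∑ h ∈ H.levelSet (ℓ + 1), f h := by
  rw [levelSet, ← sum_union (disjoint_filter.2 fun h _ hh => by omega)]
  congr 1
  ext h
  simp only [mem_union, mem_filter, mem_univ, true_and]
  omega

def weightIncrement (w : H.Node → ℝ) (h : H.Node) : ℝ :=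
  if h = H.root then w H.root else w h - w (H.parent h)

theorem weightIncrement_of_mem_children (w : H.Node → ℝ) {c h : H.Node}
    (hc : c ∈ H.children h) : H.weightIncrement w c = w c - w h := by
  obtain ⟨hcr, rfl⟩ := H.mem_children.1 hc
  simp [weightIncrement, hcr]

theorem sum_sq_weightIncrement (w : H.Node → ℝ) :
    ∑ h, H.weightIncrement w h ^ 2 = w H.root ^ 2 + H.frag w := by
  rw [← add_sum_erase _ _ (mem_univ H.root), frag, filter_ne']
  simp only [weightIncrement, if_pos]
  congr 1
  refine sum_congr rfl fun h hh => ?_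
  rw [if_neg (ne_of_mem_erase hh)]

variable {H} {a L α w : H.Node → ℝ}

theorem IsToyDown.error_of_mem_children (hα : H.IsToyDown a L α) (hcons : H.Consistent a)
    {h c : H.Node} (hh : H.level h < H.d) (hc : c ∈ H.children h) :
    α c - a c = L c + (α h - a h - ∑ c' ∈ H.children h, L c') / #(H.children h) := by
  obtain ⟨hsum, hmin⟩ := hα.2 h hh
  have := eq_add_div_card_of_forall_sum_sq_lt (H.children_nonempty hh) hsum hmin hc
  rw [this, sum_add_distrib, ← hcons h hh]
  ring

theorem IsToyDown.sum_children_weight_mul_error (hα : H.IsToyDown a L α)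
    (hcons : H.Consistent a)
    (hw : ∀ h, H.level h < H.d → w h = (∑ c ∈ H.children h, w c) / #(H.children h))
    {h : H.Node} (hh : H.level h < H.d) :
    ∑ c ∈ H.children h, w c * (α c - a c) =
      ∑ c ∈ H.children h, H.weightIncrement w c * L c + w h * (α h - a h) := by
  have hcard : (#(H.children h) : ℝ) ≠ 0 := by
    exact_mod_cast (H.children_nonempty hh).card_pos.ne'
  have hwsum : ∑ c ∈ H.children h, w c = #(H.children h) * w h := by
    rw [hw h hh]
    field_simp
  have herror : ∑ c ∈ H.children h, w c * (α c - a c) = ∑ c ∈ H.children h,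
      w c * (L c + (α h - a h - ∑ c' ∈ H.children h, L c') / #(H.children h)) :=
    sum_congr rfl fun c hc => by rw [hα.error_of_mem_children hcons hh hc]
  have hincrement : ∑ c ∈ H.children h, H.weightIncrement w c * L c =
      ∑ c ∈ H.children h, (w c - w h) * L c :=
    sum_congr rfl fun c hc => by rw [H.weightIncrement_of_mem_children w hc]
  rw [herror, hincrement]
  simp only [mul_add, sum_add_distrib, ← sum_mul, sub_mul, sum_sub_distrib, ← mul_sum, hwsum]
  field_simp
  ring

theorem IsToyDown.sum_levelSet_weight_mul_error (hα : H.IsToyDown a L α)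
    (hcons : H.Consistent a)
    (hw : ∀ h, H.level h < H.d → w h = (∑ c ∈ H.children h, w c) / #(H.children h))
    {ℓ : ℕ} (hℓ₁ : 1 ≤ ℓ) (hℓ : ℓ ≤ H.d) :
    ∑ h ∈ H.levelSet ℓ, w h * (α h - a h) =
      ∑ h with H.level h ≤ ℓ, H.weightIncrement w h * L h := by
  induction ℓ, hℓ₁ using Nat.le_induction with
  | base =>
    simp [levelSet_one, filter_level_le_one, weightIncrement, hα.1]
  | succ ℓ hℓ₁ ih =>
    have hnonleaf : ∀ h ∈ H.levelSet ℓ, H.level h < H.d := fun h hh => by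
      rw [levelSet, mem_filter] at hh
      omega
    rw [H.levelSet_succ hℓ₁, sum_biUnion (H.pairwiseDisjoint_children _),
      sum_congr rfl fun h hh => hα.sum_children_weight_mul_error hcons hw (hnonleaf h hh),
      sum_add_distrib, ih (by omega), ← sum_biUnion (H.pairwiseDisjoint_children _),
      ← H.levelSet_succ hℓ₁, sum_filter_level_le_succ, add_comm]

theorem IsToyDown.sum_error_eq_sum_weightIncrement_mul (hα : H.IsToyDown a L α)
    (hcons : H.Consistent a) {D : Finset H.Node} (hD : D ⊆ H.leaves) (hw : H.IsWeights D w) :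
    ∑ h ∈ D, (α h - a h) = ∑ h, H.weightIncrement w h * L h := by
  have hleaves : ∑ h ∈ H.leaves, w h * (α h - a h) = ∑ h ∈ D, (α h - a h) := by
    rw [← inter_eq_right.2 hD, ← sum_ite_mem]
    refine sum_congr rfl fun h hh => ?_
    rw [leaves, levelSet, mem_filter] at hh
    rw [hw.1 h hh.2, ite_mul, one_mul, zero_mul]
  rw [← hleaves, leaves, hα.sum_levelSet_weight_mul_error hcons hw.2 H.d_pos le_rfl,
    filter_true_of_mem fun h _ => H.level_le h]

end Hierarchy

theorem toydown_variance_frag_general (H : Hierarchy)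
    {Ω : Type} [MeasurableSpace Ω] (μ : MeasureTheory.Measure Ω)
    (ε : ℝ)
    (a : H.Node → ℝ) (hcons : H.Consistent a)
    (L : H.Node → Ω → ℝ)
    (hL2 : ∀ h, MeasureTheory.MemLp (L h) 2 μ)
    (hindep : iIndepFun L μ)
    (hvar : ∀ h, variance (L h) μ = 8 * (H.d : ℝ) ^ 2 / ε ^ 2)
    (α : H.Node → Ω → ℝ)
    (hα : ∀ ω, H.IsToyDown a (fun h => L h ω) (fun h => α h ω))
    (D : Finset H.Node) (hD : D ⊆ H.leaves)
    (w : H.Node → ℝ) (hw : H.IsWeights D w) :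
    variance (fun ω => ∑ h ∈ D, (α h ω - a h)) μ =
      (8 * (H.d : ℝ) ^ 2 / ε ^ 2) * ((w H.root) ^ 2 + H.frag w) := by
  have herror : (fun ω => ∑ h ∈ D, (α h ω - a h)) =
      fun ω => ∑ h, H.weightIncrement w h * L h ω :=
    funext fun ω => (hα ω).sum_error_eq_sum_weightIncrement_mul hcons hD hw
  rw [herror, variance_sum_const_mul_of_iIndepFun hL2 hindep, ← H.sum_sq_weightIncrement,
    mul_sum]
  simp_rw [hvar, mul_comm]

/-- Under the equal-split allocation (`Var(L_h) = 8d²/ε²` at every node), the district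
error variance equals `(8d²/ε²)·(w_root² + Frag(D))`. -/
theorem toydown_variance_frag (H : Hierarchy)
    {Ω : Type} [MeasurableSpace Ω] (μ : MeasureTheory.Measure Ω)
    [MeasureTheory.IsProbabilityMeasure μ]
    (ε : ℝ) (hε : 0 < ε)
    (a : H.Node → ℝ) (hcons : H.Consistent a)
    (L : H.Node → Ω → ℝ)
    (hmeas : ∀ h, Measurable (L h))
    (hL2 : ∀ h, MeasureTheory.MemLp (L h) 2 μ)
    (hindep : iIndepFun L μ)
    (hmean : ∀ h, ∫ ω, L h ω ∂μ = 0)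
    (hvar : ∀ h, variance (L h) μ = 8 * (H.d : ℝ) ^ 2 / ε ^ 2)
    (α : H.Node → Ω → ℝ)
    (hα : ∀ ω, H.IsToyDown a (fun h => L h ω) (fun h => α h ω))
    (D : Finset H.Node) (hD : D ⊆ H.leaves)
    (w : H.Node → ℝ) (hw : H.IsWeights D w) :
    variance (fun ω => ∑ h ∈ D, (α h ω - a h)) μ =
      (8 * (H.d : ℝ) ^ 2 / ε ^ 2) * ((w H.root) ^ 2 + H.frag w) :=
  toydown_variance_frag_general H μ ε a hcons L hL2 hindep hvar α hα D hD w hw
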